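/- arXiv:1810.06872 — 5 statements merged into one kernel-verified Lean document; each statement's English description precedes it below -/
import Mathlib

section
/- For every connected split graph G with no dominating vertex, the domination number, the semitotal domination number, and the total domination number of G are all equal. -/
/-!
A dominating set of a split graph with clique `C` can be pushed into `C`, replacing each vertex
outside `C` by one of its neighbours (all of which lie in `C`) without growing. The pushed set still
dominates every vertex outside `C`, and it totally dominates every `x ∈ C` unless it is `{x}`, in
which case `x` would be a dominating vertex. Hence `γ_t ≤ γ`, while `γ ≤ γ_{t2} ≤ γ_t` holds in
every graph.
-/

open SimpleGraph

/-- `D` is a dominating set of `G`. -/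
def IsDomSet {V : Type*} [DecidableEq V] (G : SimpleGraph V) (D : Finset V) : Prop :=
  ∀ v, v ∉ D → ∃ u ∈ D, G.Adj u v

/-- `D` is a total dominating set of `G`. -/
def IsTotDomSet {V : Type*} [DecidableEq V] (G : SimpleGraph V) (D : Finset V) : Prop :=
  ∀ v : V, ∃ u ∈ D, G.Adj u v

/-- `u` and `v` are distinct and within distance at most 2 in `G`. -/
def WithinTwo {V : Type*} (G : SimpleGraph V) (u v : V) : Prop :=
  G.Adj u v ∨ ∃ w, G.Adj u w ∧ G.Adj w v

/-- `D` is a semitotal dominating set of `G`. -/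
def IsSemiTDSet {V : Type*} [DecidableEq V] (G : SimpleGraph V) (D : Finset V) : Prop :=
  IsDomSet G D ∧ ∀ v ∈ D, ∃ u ∈ D, u ≠ v ∧ WithinTwo G u v

/-- The domination number of `G`. -/
noncomputable def gamma {V : Type*} [Fintype V] [DecidableEq V] (G : SimpleGraph V) : ℕ :=
  sInf {n | ∃ D : Finset V, IsDomSet G D ∧ D.card = n}

/-- The total domination number of `G`. -/
noncomputable def gammaT {V : Type*} [Fintype V] [DecidableEq V] (G : SimpleGraph V) : ℕ :=
  sInf {n | ∃ D : Finset V, IsTotDomSet G D ∧ D.card = n}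

/-- The semitotal domination number of `G`. -/
noncomputable def gammaT2 {V : Type*} [Fintype V] [DecidableEq V] (G : SimpleGraph V) : ℕ :=
  sInf {n | ∃ D : Finset V, IsSemiTDSet G D ∧ D.card = n}

section

variable {V : Type*}

lemma IsTotDomSet.isSemiTDSet [DecidableEq V] {G : SimpleGraph V} {D : Finset V}
    (hD : IsTotDomSet G D) : IsSemiTDSet G D :=
  ⟨fun v _ ↦ hD v, fun v _ ↦
    let ⟨u, hu, huv⟩ := hD v
    ⟨u, hu, huv.ne, Or.inl huv⟩⟩

lemma isDomSet_univ [Fintype V] [DecidableEq V] (G : SimpleGraph V) : IsDomSet G Finset.univ :=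
  fun v hv ↦ absurd (Finset.mem_univ v) hv

lemma sInf_card_le_sInf_card {P Q : Finset V → Prop} (hP : ∃ D, P D)
    (h : ∀ D, P D → ∃ D', Q D' ∧ D'.card ≤ D.card) :
    sInf {n | ∃ D, Q D ∧ D.card = n} ≤ sInf {n | ∃ D, P D ∧ D.card = n} := by
  obtain ⟨D₀, hD₀⟩ := hP
  obtain ⟨D, hD, hcard⟩ := Nat.sInf_mem (s := {n | ∃ D, P D ∧ D.card = n}) ⟨_, D₀, hD₀, rfl⟩
  obtain ⟨D', hD', hle⟩ := h D hD
  calc sInf {n | ∃ D, Q D ∧ D.card = n} ≤ D'.card := Nat.sInf_le ⟨D', hD', rfl⟩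
    _ ≤ D.card := hle
    _ = sInf {n | ∃ D, P D ∧ D.card = n} := hcard

lemma isTotDomSet_of_subset_clique [DecidableEq V] {G : SimpleGraph V} {C : Set V} {S : Finset V}
    (hC : G.IsClique C) (hSC : ∀ u ∈ S, u ∈ C) (hout : ∀ v ∉ C, ∃ u ∈ S, G.Adj u v)
    (hnodom : ¬ ∃ v : V, ∀ u : V, u ≠ v → G.Adj v u) : IsTotDomSet G S := by
  intro x
  by_cases hxC : x ∈ C
  · by_contra hx
    push Not at hx
    refine hnodom ⟨x, fun w hwx ↦ ?_⟩
    by_cases hwC : w ∈ C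
    · exact hC hxC hwC hwx.symm
    obtain ⟨u, huS, huw⟩ := hout w hwC
    obtain rfl | hux := eq_or_ne u x
    · exact huw
    · exact absurd (hC (hSC u huS) hxC hux) (hx u huS)
  · exact hout x hxC

lemma exists_isTotDomSet_card_le_of_isDomSet [DecidableEq V] {G : SimpleGraph V} {C : Set V}
    (hC : G.IsClique C) (hind : ∀ a ∈ Cᶜ, ∀ b ∈ Cᶜ, ¬ G.Adj a b) (hnbr : ∀ v, ∃ u, G.Adj v u)
    (hnodom : ¬ ∃ v : V, ∀ u : V, u ≠ v → G.Adj v u) {D : Finset V} (hD : IsDomSet G D) :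
    ∃ D', IsTotDomSet G D' ∧ D'.card ≤ D.card := by
  classical
  have hnbrC : ∀ v ∉ C, ∃ u ∈ C, G.Adj v u := fun v hv ↦
    let ⟨u, hvu⟩ := hnbr v
    ⟨u, by_contra fun hu ↦ hind v hv u hu hvu, hvu⟩
  choose g hgC hgadj using hnbrC
  let f : V → V := fun v ↦ if h : v ∈ C then v else g v h
  have hfC : ∀ v, f v ∈ C := fun v ↦ by
    by_cases h : v ∈ C <;> simp [f, h, hgC]
  refine ⟨D.image f, isTotDomSet_of_subset_clique hC ?_ ?_ hnodom, Finset.card_image_le⟩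
  · exact Finset.forall_mem_image.mpr fun v _ ↦ hfC v
  · intro x hxC
    by_cases hxD : x ∈ D
    · exact ⟨g x hxC, Finset.mem_image.mpr ⟨x, hxD, by simp [f, hxC]⟩, (hgadj x hxC).symm⟩
    obtain ⟨u, huD, hux⟩ := hD x hxD
    have huC : u ∈ C := by_contra fun hu ↦ hind u hu x hxC hux
    exact ⟨u, Finset.mem_image.mpr ⟨u, huD, by simp [f, huC]⟩, hux⟩

end

theorem split_graph_domination_equal_general {V : Type*} [Fintype V] [DecidableEq V]
    (G : SimpleGraph V) (hconn : G.Connected)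
    (hsplit : ∃ C : Set V, G.IsClique C ∧ ∀ a ∈ Cᶜ, ∀ b ∈ Cᶜ, ¬ G.Adj a b)
    (hnodom : ¬ ∃ v : V, ∀ u : V, u ≠ v → G.Adj v u) :
    gamma G = gammaT2 G ∧ gammaT2 G = gammaT G := by
  obtain ⟨C, hC, hind⟩ := hsplit
  have : Nontrivial V := not_subsingleton_iff_nontrivial.mp fun _ ↦
    hnodom ⟨hconn.nonempty.some, fun _ hu ↦ (hu (Subsingleton.elim _ _)).elim⟩
  have htot : ∀ D, IsDomSet G D → ∃ D', IsTotDomSet G D' ∧ D'.card ≤ D.card := fun _ ↦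
    exists_isTotDomSet_card_le_of_isDomSet hC hind hconn.preconnected.exists_adj_of_nontrivial
      hnodom
  obtain ⟨T, hT, -⟩ := htot _ (isDomSet_univ G)
  have h₁ : gamma G ≤ gammaT2 G :=
    sInf_card_le_sInf_card ⟨T, hT.isSemiTDSet⟩ fun D hD ↦ ⟨D, hD.1, le_rfl⟩
  have h₂ : gammaT2 G ≤ gammaT G :=
    sInf_card_le_sInf_card ⟨T, hT⟩ fun D hD ↦ ⟨D, hD.isSemiTDSet, le_rfl⟩
  have h₃ : gammaT G ≤ gamma G :=
    sInf_card_le_sInf_card ⟨_, isDomSet_univ G⟩ htot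
  omega

theorem split_graph_domination_equal {V : Type*} [Fintype V] [DecidableEq V]
    (G : SimpleGraph V) (hconn : G.Connected)
    (hsplit : ∃ C : Set V, G.IsClique C ∧ ∀ a ∈ Cᶜ, ∀ b ∈ Cᶜ, ¬ G.Adj a b)
    (hcard : 2 ≤ Fintype.card V)
    (hnodom : ¬ ∃ v : V, ∀ u : V, u ≠ v → G.Adj v u) :
    gamma G = gammaT2 G ∧ gammaT2 G = gammaT G :=
  split_graph_domination_equal_general G hconn hsplit hnodom
end

section
/- Let G be a graph with at least one edge and let Q(G) be the split graph with vertex set V(G) ∪ E(G), clique on V(G), independent set E(G), and each e ∈ E(G) adjacent to its endpoints. If G contains no cycle (not necessarily induced) of length i for some i ≥ 3, then Q(G) contains no induced i-sun S_i. -/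
open SimpleGraph

/-- The split graph `Q(G)`. -/
def QGraph {V : Type*} (G : SimpleGraph V) : SimpleGraph (V ⊕ G.edgeSet) :=
  SimpleGraph.fromRel (fun a b =>
    match a, b with
    | Sum.inl _, Sum.inl _ => True
    | Sum.inl a, Sum.inr e => a ∈ (e : Sym2 V)
    | _, _ => False)

/-- The `n`-sun: vertices `Fin n ⊕ Fin n`, where the left copy `W` is independent, the
right copy `U` is a clique, and `w i` is adjacent to `u j` iff `i = j` or `i ≡ j + 1 (mod n)`. -/
def sunGraph (n : ℕ) : SimpleGraph (Fin n ⊕ Fin n) :=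
  SimpleGraph.fromRel (fun a b =>
    match a, b with
    | Sum.inr _, Sum.inr _ => True
    | Sum.inl i, Sum.inr j => i = j ∨ (i : ℕ) = ((j : ℕ) + 1) % n
    | _, _ => False)

/-! In `Q(G)` an edge-vertex sees only its two endpoints, which are adjacent, so in an induced copy
of `S_i` every `u_b` (whose neighbours `w_b`, `w_{b+1}` are non-adjacent) lands on a vertex of `G`,
and then every `w_a` (non-adjacent to `u_{a+1}`) lands on an edge of `G`. Since `w_{b+1}` sees
`u_b` and `u_{b+1}`, its image is the edge between their images, so the images of
`u_0, …, u_{i-1}` form a cycle of length `i` in `G`. -/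

section QGraph

variable {V : Type*} {G : SimpleGraph V}

@[simp]
lemma QGraph_adj_inl_inl {x y : V} : (QGraph G).Adj (.inl x) (.inl y) ↔ x ≠ y := by
  simp [QGraph]

@[simp]
lemma QGraph_adj_inl_inr {x : V} {e : G.edgeSet} :
    (QGraph G).Adj (.inl x) (.inr e) ↔ x ∈ (e : Sym2 V) := by
  simp [QGraph]

@[simp]
lemma QGraph_not_adj_inr_inr (e e' : G.edgeSet) : ¬(QGraph G).Adj (.inr e) (.inr e') := by
  simp [QGraph]

lemma exists_eq_inl_of_QGraph_adj_inr {a : V ⊕ G.edgeSet} {e : G.edgeSet}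
    (h : (QGraph G).Adj a (.inr e)) : ∃ p, a = .inl p := by
  rcases a with p | e'
  · exact ⟨p, rfl⟩
  · exact absurd h (QGraph_not_adj_inr_inr e' e)

variable {W : Type*} {H : SimpleGraph W} (f : H ↪g QGraph G)

lemma exists_eq_inl_of_adj_of_adj_of_not_adj {x y z : W} (hy : H.Adj x y) (hz : H.Adj x z)
    (hyz : y ≠ z) (hnyz : ¬H.Adj y z) : ∃ p, f x = .inl p := by
  rcases hfx : f x with p | e
  · exact ⟨p, rfl⟩
  have hy' := f.map_rel_iff.mpr hy.symm
  have hz' := f.map_rel_iff.mpr hz.symm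
  rw [hfx] at hy' hz'
  obtain ⟨p, hp⟩ := exists_eq_inl_of_QGraph_adj_inr hy'
  obtain ⟨q, hq⟩ := exists_eq_inl_of_QGraph_adj_inr hz'
  refine absurd (f.map_rel_iff.mp ?_) hnyz
  rw [hp, hq, QGraph_adj_inl_inl]
  rintro rfl
  exact hyz (f.injective (hp.trans hq.symm))

lemma exists_eq_inr_of_not_adj {x y : W} {p : V} (hxy : x ≠ y) (hn : ¬H.Adj x y)
    (hy : f y = .inl p) : ∃ e, f x = .inr e := by
  rcases hfx : f x with q | e
  · refine absurd (f.map_rel_iff.mp ?_) hn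
    rw [hfx, hy, QGraph_adj_inl_inl]
    rintro rfl
    exact hxy (f.injective (hfx.trans hy.symm))
  · exact ⟨e, rfl⟩

lemma adj_of_adj_of_adj_of_eq_inr {x y z : W} {e : G.edgeSet} {p q : V} (hy : H.Adj x y)
    (hz : H.Adj x z) (hyz : y ≠ z) (hx : f x = .inr e) (hp : f y = .inl p) (hq : f z = .inl q) :
    G.Adj p q := by
  have hpe := f.map_rel_iff.mpr hy.symm
  have hqe := f.map_rel_iff.mpr hz.symm
  rw [hx, hp, QGraph_adj_inl_inr] at hpe
  rw [hx, hq, QGraph_adj_inl_inr] at hqe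
  have hpq : p ≠ q := by
    rintro rfl
    exact hyz (f.injective (hp.trans hq.symm))
  rw [← G.mem_edgeSet, ← (Sym2.mem_and_mem_iff hpq).mp ⟨hpe, hqe⟩]
  exact e.2

end QGraph

section sunGraph

variable {n : ℕ}

@[simp]
lemma sunGraph_not_adj_inl_inl (a b : Fin n) : ¬(sunGraph n).Adj (.inl a) (.inl b) := by
  simp [sunGraph]

lemma sunGraph_adj_inl_inr [NeZero n] {a b : Fin n} :
    (sunGraph n).Adj (.inl a) (.inr b) ↔ a = b ∨ a = b + 1 := by
  simp [sunGraph, Fin.ext_iff, Fin.val_add]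

end sunGraph

lemma exists_isCycle_of_injective_of_adj_add_one {V : Type*} {G : SimpleGraph V} {n : ℕ}
    [NeZero n] (hn : 3 ≤ n) (φ : Fin n → V) (hφ : Function.Injective φ)
    (hadj : ∀ a, G.Adj (φ a) (φ (a + 1))) :
    ∃ (v : V) (p : G.Walk v v), p.IsCycle ∧ p.length = n := by
  refine (cycleGraph_isContained_iff hn).mp ⟨Hom.toCopy ⟨φ, fun {a b} hab => ?_⟩ hφ⟩
  have hval : ∀ c : Fin n, (c : ℕ) = 1 → c = 1 := fun c hc => by
    ext; rw [hc, Fin.val_one', Nat.mod_eq_of_lt (by omega)]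
  rcases cycleGraph_adj'.mp hab with h | h
  · rw [sub_eq_iff_eq_add.mp (hval _ h), add_comm]
    exact (hadj b).symm
  · rw [sub_eq_iff_eq_add.mp (hval _ h), add_comm]
    exact hadj a

theorem QGraph_sun_free_general {V : Type*}
    (G : SimpleGraph V) (i : ℕ) (hi : 3 ≤ i)
    (hcyc : ∀ (a : V) (w : G.Walk a a), w.IsCycle → w.length ≠ i) :
    IsEmpty (sunGraph i ↪g QGraph G) := by
  have : NeZero i := ⟨by omega⟩
  have hsucc : ∀ a : Fin i, a ≠ a + 1 := fun a =>
    left_ne_add.mpr (by simp [Fin.ext_iff, Nat.mod_eq_of_lt (by omega : 1 < i)])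
  have hsucc₂ : ∀ a : Fin i, a ≠ a + 1 + 1 := fun a => by
    rw [add_assoc]
    exact left_ne_add.mpr (by simp [Fin.ext_iff, Fin.val_add, Nat.mod_eq_of_lt hi])
  refine ⟨fun f => ?_⟩
  have hU : ∀ b, ∃ p, f (.inr b) = .inl p := fun b =>
    exists_eq_inl_of_adj_of_adj_of_not_adj f (y := .inl b) (z := .inl (b + 1))
      (sunGraph_adj_inl_inr.mpr (.inl rfl)).symm (sunGraph_adj_inl_inr.mpr (.inr rfl)).symm
      (Sum.inl_injective.ne (hsucc b)) (sunGraph_not_adj_inl_inl _ _)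
  choose φ hφ using hU
  have hW : ∀ a, ∃ e, f (.inl a) = .inr e := fun a =>
    exists_eq_inr_of_not_adj f (y := .inr (a + 1)) Sum.inl_ne_inr
      (by rw [sunGraph_adj_inl_inr, not_or]; exact ⟨hsucc a, hsucc₂ a⟩) (hφ (a + 1))
  choose ε hε using hW
  have hadj : ∀ b, G.Adj (φ b) (φ (b + 1)) := fun b =>
    adj_of_adj_of_adj_of_eq_inr f (x := .inl (b + 1)) (sunGraph_adj_inl_inr.mpr (.inr rfl))
      (sunGraph_adj_inl_inr.mpr (.inl rfl)) (Sum.inr_injective.ne (hsucc b)) (hε _) (hφ b)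
      (hφ (b + 1))
  have hφinj : Function.Injective φ := fun a b h =>
    Sum.inr_injective (f.injective ((hφ a).trans (h ▸ (hφ b).symm)))
  obtain ⟨v, p, hp, hlen⟩ := exists_isCycle_of_injective_of_adj_add_one hi φ hφinj hadj
  exact hcyc v p hp hlen

theorem QGraph_sun_free {V : Type*} [Fintype V] [DecidableEq V]
    (G : SimpleGraph V) (hE : G.edgeSet.Nonempty) (i : ℕ) (hi : 3 ≤ i)
    (hcyc : ∀ (a : V) (w : G.Walk a a), w.IsCycle → w.length ≠ i) :
    IsEmpty (sunGraph i ↪g QGraph G) :=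
  QGraph_sun_free_general G i hi hcyc
end

section
/- A graph G is dually chordal if and only if there exists a spanning tree T of G such that for every vertex z of G, the closed neighbourhood N_G[z] induces a subtree of T. -/
open SimpleGraph

/-!
For connected `G`, the disk of radius `r + 1` around `z` is the union of the closed
neighbourhoods `N[w]` of the vertices `w` of the disk of radius `r`. If every `N[w]` induces a
connected subgraph of `T`, then so does every disk, by induction on `r`: each `N[w]` meets the
(inductively `T`-connected) smaller disk in `w`. Conversely, `N[z]` is the disk of radius `1`.
-/

namespace SimpleGraph

variable {V : Type*}

lemma induce_biUnion_connected {H : SimpleGraph V} {s : Set V} {t : V → Set V}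
    (hs : (H.induce s).Connected) (hmem : ∀ w ∈ s, w ∈ t w)
    (ht : ∀ w ∈ s, (H.induce (t w)).Connected) :
    (H.induce (⋃ w ∈ s, t w)).Connected := by
  obtain ⟨⟨u, hu⟩⟩ := hs.nonempty
  have hsub : s ⊆ ⋃ w ∈ s, t w := fun x hx => Set.mem_biUnion hx (hmem x hx)
  refine H.induce_connected_of_patches u (hsub hu) fun {v} hv => ?_
  obtain ⟨w, hw, hvw⟩ := Set.mem_iUnion₂.mp hv
  exact ⟨s ∪ t w, Set.union_subset hsub (Set.subset_biUnion_of_mem hw), Or.inl hu, Or.inr hvw,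
    induce_union_connected hs.preconnected (ht w hw).preconnected ⟨w, hw, hmem w hw⟩ _ _⟩

variable {G : SimpleGraph V}

lemma Connected.setOf_dist_le_zero (hconn : G.Connected) (z : V) :
    {v | G.dist z v ≤ 0} = {z} := by
  ext v
  simp [hconn.dist_eq_zero_iff, eq_comm]

lemma Connected.exists_dist_le_and_eq_or_adj (hconn : G.Connected) {z v : V} {r : ℕ}
    (hv : G.dist z v ≤ r + 1) : ∃ w, G.dist z w ≤ r ∧ (v = w ∨ G.Adj w v) := by
  obtain rfl | hne := eq_or_ne v z
  · exact ⟨v, by simp, Or.inl rfl⟩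
  obtain ⟨p, hp⟩ := hconn.exists_walk_length_eq_dist v z
  obtain ⟨w, hvw, q, rfl⟩ := p.exists_eq_cons_of_ne hne
  refine ⟨w, ?_, Or.inr hvw.symm⟩
  have hq : G.dist w z ≤ q.length := dist_le q
  rw [Walk.length_cons, dist_comm] at hp
  rw [dist_comm]
  omega

lemma Connected.setOf_dist_le_add_one_eq_biUnion (hconn : G.Connected) (z : V) (r : ℕ) :
    {v | G.dist z v ≤ r + 1} = ⋃ w ∈ {v | G.dist z v ≤ r}, {u | u = w ∨ G.Adj w u} := by
  ext v
  simp only [Set.mem_ofPred_eq, Set.mem_iUnion, exists_prop]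
  refine ⟨hconn.exists_dist_le_and_eq_or_adj, ?_⟩
  rintro ⟨w, hw, rfl | hwv⟩
  · omega
  · calc G.dist z v ≤ G.dist z w + G.dist w v := hconn.dist_triangle
      _ = G.dist z w + 1 := by rw [dist_eq_one_iff_adj.mpr hwv]
      _ ≤ r + 1 := by omega

lemma Connected.setOf_dist_le_one (hconn : G.Connected) (z : V) :
    {v | G.dist z v ≤ 1} = {v | v = z ∨ G.Adj z v} := by
  simpa only [zero_add, hconn.setOf_dist_le_zero, Set.biUnion_singleton] using
    hconn.setOf_dist_le_add_one_eq_biUnion z 0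

lemma Connected.induce_setOf_dist_le_connected {T : SimpleGraph V} (hconn : G.Connected)
    (hnbhd : ∀ w, (T.induce {v | v = w ∨ G.Adj w v}).Connected) (z : V) :
    ∀ r : ℕ, (T.induce {v | G.dist z v ≤ r}).Connected
  | 0 => by
    rw [hconn.setOf_dist_le_zero, induce_singleton_eq_top]
    exact connected_top
  | r + 1 => by
    rw [hconn.setOf_dist_le_add_one_eq_biUnion]
    exact induce_biUnion_connected (hconn.induce_setOf_dist_le_connected hnbhd z r)
      (fun _ _ => Or.inl rfl) (fun w _ => hnbhd w)

end SimpleGraph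

theorem duallyChordal_iff_compatible_tree_general {V : Type*} (G : SimpleGraph V) :
    (∃ T : SimpleGraph V, T ≤ G ∧ T.IsTree ∧
        ∀ (z : V) (r : ℕ), 1 ≤ r →
          (SimpleGraph.induce {v : V | G.dist z v ≤ r} T).Connected) ↔
    (∃ T : SimpleGraph V, T ≤ G ∧ T.IsTree ∧
        ∀ z : V, (SimpleGraph.induce {v : V | v = z ∨ G.Adj z v} T).Connected) := by
  constructor
  · rintro ⟨T, hle, htree, hdisk⟩
    have hconn : G.Connected := htree.connected.mono hle
    refine ⟨T, hle, htree, fun z => ?_⟩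
    rw [← hconn.setOf_dist_le_one z]
    exact hdisk z 1 le_rfl
  · rintro ⟨T, hle, htree, hnbhd⟩
    have hconn : G.Connected := htree.connected.mono hle
    exact ⟨T, hle, htree, fun z r _ => hconn.induce_setOf_dist_le_connected hnbhd z r⟩

theorem duallyChordal_iff_compatible_tree {V : Type*} [Fintype V] [DecidableEq V]
    (G : SimpleGraph V) (hconn : G.Connected) :
    (∃ T : SimpleGraph V, T ≤ G ∧ T.IsTree ∧
        ∀ (z : V) (r : ℕ), 1 ≤ r →
          (SimpleGraph.induce {v : V | G.dist z v ≤ r} T).Connected) ↔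
    (∃ T : SimpleGraph V, T ≤ G ∧ T.IsTree ∧
        ∀ z : V, (SimpleGraph.induce {v : V | v = z ∨ G.Adj z v} T).Connected) :=
  duallyChordal_iff_compatible_tree_general G
end

section
/- A graph G satisfies γ_{t2}(H) = γ_t(H) for every induced subgraph H of G with no isolated vertex if and only if G contains no induced cycle C_5 and no induced path P_5. -/
/-!
`C₅` and `P₅` have `γ_t2 = 2 < 3 = γ_t`, and both parameters are invariant under isomorphism, so
an induced `C₅` or `P₅` violates the hereditary equality.

Conversely, a total dominating set is semitotal, so `γ_t2 ≤ γ_t` whenever there is no isolated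
vertex. For the other inequality take a minimum semitotal dominating set `D` of a `(C₅, P₅)`-free
graph and a vertex `v ∈ D` with no neighbour in `D`. Semitotality gives `u ∈ D` and a common
neighbour `w ∉ D` of `u` and `v`. If `w` dominates every private neighbour of `v`, exchange `v`
for `w`. Otherwise a private neighbour `x` of `v` with `x ≁ w` makes `x v w u` an induced `P₄`;
excluding `C₅` and `P₅` then forces every neighbour of `u` to see `v` or `w`, and `u` can be
exchanged for `w`. Each exchange keeps `D` semitotal dominating of the same size and strictly
shrinks the set of vertices of `D` without a neighbour in `D`, so iterating ends at a total
dominating set of size `γ_t2`.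
-/

open SimpleGraph

open Finset

instance (n : ℕ) : DecidableRel (pathGraph n).Adj := fun _ _ => decidable_of_iff' _ pathGraph_adj

lemma sInf_card_eq_of_equiv {A B : Type*} (e : A ≃ B) {P : Finset A → Prop} {Q : Finset B → Prop}
    (hPQ : ∀ D, P D → Q (D.map e.toEmbedding)) (hQP : ∀ D, Q D → P (D.map e.symm.toEmbedding)) :
    sInf {n | ∃ D, P D ∧ #D = n} = sInf {n | ∃ D, Q D ∧ #D = n} := by
  congr 1
  ext n
  constructor
  · rintro ⟨D, hD, rfl⟩
    exact ⟨_, hPQ D hD, card_map _⟩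
  · rintro ⟨D, hD, rfl⟩
    exact ⟨_, hQP D hD, card_map _⟩

namespace SimpleGraph

variable {α W : Type*} {H : SimpleGraph W}

lemma nonempty_embedding_of_adj_iff {K : SimpleGraph α}
    (hK : ∀ i j, i ≠ j → ∃ k, ¬(K.Adj i k ↔ K.Adj j k)) (f : α → W)
    (hf : ∀ i j, H.Adj (f i) (f j) ↔ K.Adj i j) : Nonempty (K ↪g H) := by
  refine ⟨⟨⟨f, fun i j hij => ?_⟩, hf _ _⟩⟩
  by_contra hne
  obtain ⟨k, hk⟩ := hK i j hne
  exact hk (by rw [← hf, ← hf, hij])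

lemma nonempty_pathGraph_five_embedding {a b c d e : W}
    (hab : H.Adj a b) (hbc : H.Adj b c) (hcd : H.Adj c d) (hde : H.Adj d e)
    (hac : ¬H.Adj a c) (had : ¬H.Adj a d) (hae : ¬H.Adj a e)
    (hbd : ¬H.Adj b d) (hbe : ¬H.Adj b e) (hce : ¬H.Adj c e) :
    Nonempty (pathGraph 5 ↪g H) := by
  refine nonempty_embedding_of_adj_iff (by decide) ![a, b, c, d, e] fun i j => ?_
  fin_cases i <;> fin_cases j <;>
    simp [hab, hbc, hcd, hde, hab.symm, hbc.symm, hcd.symm, hde.symm, hac, had, hae, hbd, hbe,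
      hce, H.adj_comm _ a, H.adj_comm _ b, H.adj_comm e c] <;> decide

lemma nonempty_cycleGraph_five_embedding {a b c d e : W}
    (hab : H.Adj a b) (hbc : H.Adj b c) (hcd : H.Adj c d) (hde : H.Adj d e) (hea : H.Adj e a)
    (hac : ¬H.Adj a c) (had : ¬H.Adj a d) (hbd : ¬H.Adj b d) (hbe : ¬H.Adj b e)
    (hce : ¬H.Adj c e) :
    Nonempty (cycleGraph 5 ↪g H) := by
  refine nonempty_embedding_of_adj_iff (by decide) ![a, b, c, d, e] fun i j => ?_
  fin_cases i <;> fin_cases j <;>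
    simp [hab, hbc, hcd, hde, hea, hab.symm, hbc.symm, hcd.symm, hde.symm, hea.symm, hac, had,
      hbd, hbe, hce, H.adj_comm _ a, H.adj_comm _ b, H.adj_comm e c] <;> decide

lemma isEmpty_embedding_induce {K : SimpleGraph α} (h : IsEmpty (K ↪g H)) (s : Set W) :
    IsEmpty (K ↪g H.induce s) :=
  ⟨fun f => h.false ((Embedding.induce s).comp f)⟩

/-- Otherwise `a - y - v - w - u` is an induced `P₅`. -/
lemma withinTwo_of_not_withinTwo_of_P5free (hP5 : IsEmpty (pathGraph 5 ↪g H)) {a u v w y : W}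
    (hay : H.Adj a y) (hyv : H.Adj y v)
    (hvw : H.Adj v w) (hwu : H.Adj w u) (hav : ¬H.Adj a v) (hvu : ¬H.Adj v u)
    (hwa : ¬WithinTwo H w a) : WithinTwo H u a := by
  by_contra hua
  simp only [WithinTwo, not_or, not_exists, not_and] at hwa hua
  exact (nonempty_pathGraph_five_embedding hay hyv hvw hwu hav (hwa.1 ·.symm) (hua.1 ·.symm)
    (fun h => hwa.2 y h.symm hay.symm) (fun h => hua.2 y h.symm hay.symm) hvu).elim hP5.false

/-- With `x - v - w - u` an induced `P₄`, a neighbour `q` of `u` seeing neither `v` nor `w`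
closes an induced `C₅` through `x` or extends the path to an induced `P₅`. -/
lemma adj_or_adj_of_adj_of_P5free_of_C5free (hP5 : IsEmpty (pathGraph 5 ↪g H))
    (hC5 : IsEmpty (cycleGraph 5 ↪g H))
    {u v w x : W} (hxv : H.Adj x v) (hvw : H.Adj v w) (hwu : H.Adj w u)
    (hxw : ¬H.Adj x w) (hxu : ¬H.Adj x u) (hvu : ¬H.Adj v u) {q : W} (hqu : H.Adj q u) :
    H.Adj q v ∨ H.Adj q w := by
  by_contra! hq
  by_cases hqx : H.Adj q x
  · exact (nonempty_cycleGraph_five_embedding hxv hvw hwu hqu.symm hqx hxw hxu hvu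
      (hq.1 ·.symm) (hq.2 ·.symm)).elim hC5.false
  · exact (nonempty_pathGraph_five_embedding hqu hwu.symm hvw.symm hxv.symm hq.2 hq.1 hqx
      (hvu ·.symm) (hxu ·.symm) (hxw ·.symm)).elim hP5.false

open scoped Classical in
noncomputable def isolatedIn (H : SimpleGraph W) (D : Finset W) : Finset W :=
  D.filter fun a => ∀ b ∈ D, ¬H.Adj b a

lemma mem_isolatedIn {D : Finset W} {v : W} :
    v ∈ isolatedIn H D ↔ v ∈ D ∧ ∀ b ∈ D, ¬H.Adj b v := by
  simp [isolatedIn]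

section Domination

variable [DecidableEq W] {D : Finset W} {b t u v w : W}

lemma IsTotDomSet.isSemiTDSet (hD : IsTotDomSet H D) : IsSemiTDSet H D :=
  ⟨fun v _ => hD v, fun v _ => (hD v).imp fun _ ⟨hu, huv⟩ => ⟨hu, huv.ne, Or.inl huv⟩⟩

lemma isTotDomSet_univ [Fintype W] (h : ∀ v, ∃ u, H.Adj v u) : IsTotDomSet H univ :=
  fun v => (h v).imp fun _ hu => ⟨mem_univ _, hu.symm⟩

lemma IsSemiTDSet.isTotDomSet_of_isolatedIn_eq_empty (hD : IsSemiTDSet H D)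
    (h : isolatedIn H D = ∅) : IsTotDomSet H D := by
  intro v
  by_cases hv : v ∈ D
  · by_contra! hno
    simpa [h] using mem_isolatedIn.2 ⟨hv, hno⟩
  · exact hD.1 v hv

lemma card_insert_erase_of_notMem (ht : t ∈ D) (hw : w ∉ D) :
    #(insert w (D.erase t)) = #D := by
  rw [card_insert_of_notMem fun h => hw (mem_of_mem_erase h), card_erase_add_one ht]

lemma IsDomSet.insert_erase (hD : IsDomSet H D) (hwt : H.Adj w t)
    (hpriv : ∀ z ∉ D, H.Adj t z → (∀ d ∈ D, d ≠ t → ¬H.Adj d z) → H.Adj w z) :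
    IsDomSet H (insert w (D.erase t)) := by
  intro z hz
  by_cases hzt : z = t
  · exact ⟨w, mem_insert_self w _, hzt ▸ hwt⟩
  have hzD : z ∉ D := fun h => hz (mem_insert_of_mem (mem_erase_of_ne_of_mem hzt h))
  by_cases hother : ∃ d ∈ D, d ≠ t ∧ H.Adj d z
  · obtain ⟨d, hd, hdt, hdz⟩ := hother
    exact ⟨d, mem_insert_of_mem (mem_erase_of_ne_of_mem hdt hd), hdz⟩
  · push Not at hother
    obtain ⟨d, hd, hdz⟩ := hD z hzD
    have hdt : d = t := by_contra fun hdt => hother d hd hdt hdz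
    exact ⟨w, mem_insert_self w _, hpriv z hzD (hdt ▸ hdz) hother⟩

lemma IsSemiTDSet.insert_erase (hD : IsSemiTDSet H D) (hdom : IsDomSet H (insert w (D.erase t)))
    (hb : b ∈ D) (hbt : b ≠ t) (hbw : H.Adj b w)
    (hrepl : ∀ a ∈ D, a ≠ t → WithinTwo H t a →
      ∃ c ∈ insert w (D.erase t), c ≠ a ∧ WithinTwo H c a) :
    IsSemiTDSet H (insert w (D.erase t)) := by
  refine ⟨hdom, fun a ha => ?_⟩
  rcases mem_insert.1 ha with rfl | ha
  · exact ⟨b, mem_insert_of_mem (mem_erase_of_ne_of_mem hbt hb), hbw.ne, Or.inl hbw⟩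
  obtain ⟨hat, haD⟩ := mem_erase.1 ha
  obtain ⟨p, hp, hpa, hpa2⟩ := hD.2 a haD
  by_cases hpt : p = t
  · exact hrepl a haD hat (hpt ▸ hpa2)
  · exact ⟨p, mem_insert_of_mem (mem_erase_of_ne_of_mem hpt hp), hpa, hpa2⟩

lemma isolatedIn_insert_erase_ssubset (hb : b ∈ D) (hbt : b ≠ t) (hbw : H.Adj b w)
    (ht : ∀ a ∈ D, a ≠ t → H.Adj t a → ∃ c ∈ insert w (D.erase t), H.Adj c a)
    (hv : v ∈ isolatedIn H D) (hv' : v ∉ isolatedIn H (insert w (D.erase t))) :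
    isolatedIn H (insert w (D.erase t)) ⊂ isolatedIn H D := by
  refine (ssubset_iff_of_subset fun a ha => ?_).2 ⟨v, hv, hv'⟩
  obtain ⟨haD', hiso⟩ := mem_isolatedIn.1 ha
  rcases mem_insert.1 haD' with rfl | haD'
  · exact absurd hbw (hiso b (mem_insert_of_mem (mem_erase_of_ne_of_mem hbt hb)))
  obtain ⟨hat, haD⟩ := mem_erase.1 haD'
  refine mem_isolatedIn.2 ⟨haD, fun c hc hca => ?_⟩
  by_cases hct : c = t
  · obtain ⟨c', hc', hc'a⟩ := ht a haD hat (hct ▸ hca)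
    exact hiso c' hc' hc'a
  · exact hiso c (mem_insert_of_mem (mem_erase_of_ne_of_mem hct hc)) hca

lemma IsSemiTDSet.exchange_of_dominates_private (hP5 : IsEmpty (pathGraph 5 ↪g H))
    (hD : IsSemiTDSet H D) (hv : v ∈ isolatedIn H D) (hu : u ∈ D) (huv : u ≠ v)
    (hvw : H.Adj v w) (hwu : H.Adj w u)
    (hpriv : ∀ x ∉ D, H.Adj v x → (∀ d ∈ D, d ≠ v → ¬H.Adj d x) → H.Adj w x) :
    IsSemiTDSet H (insert w (D.erase v)) ∧
      isolatedIn H (insert w (D.erase v)) ⊂ isolatedIn H D := by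
  obtain ⟨hvD, hviso⟩ := mem_isolatedIn.1 hv
  have hw : w ∉ D := fun h => hviso w h hvw.symm
  have hdom := hD.1.insert_erase hvw.symm hpriv
  refine ⟨hD.insert_erase hdom hu huv hwu.symm fun a haD _ hva => ?_,
    isolatedIn_insert_erase_ssubset hu huv hwu.symm
      (fun a haD _ hva => absurd hva.symm (hviso a haD)) hv fun h => ?_⟩
  · rcases hva with hva | ⟨y, hvy, hya⟩
    · exact absurd hva.symm (hviso a haD)
    by_cases hwa : WithinTwo H w a
    · exact ⟨w, mem_insert_self w _, ne_of_mem_of_not_mem haD hw |>.symm, hwa⟩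
    · exact ⟨u, mem_insert_of_mem (mem_erase_of_ne_of_mem huv hu),
        fun hua => hwa (hua ▸ Or.inl hwu),
        withinTwo_of_not_withinTwo_of_P5free hP5 hya.symm hvy.symm hvw hwu
          (hviso a haD) (hviso u hu ·.symm) hwa⟩
  · rcases mem_insert.1 (mem_isolatedIn.1 h).1 with hvw' | hv'
    · exact hvw.ne hvw'
    · exact notMem_erase v D hv'

lemma IsSemiTDSet.exchange_of_forall_adj_or_adj (hD : IsSemiTDSet H D)
    (hv : v ∈ isolatedIn H D) (huv : u ≠ v) (hvw : H.Adj v w) (hwu : H.Adj w u)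
    (hN : ∀ q, H.Adj q u → H.Adj q v ∨ H.Adj q w) :
    IsSemiTDSet H (insert w (D.erase u)) ∧
      isolatedIn H (insert w (D.erase u)) ⊂ isolatedIn H D := by
  obtain ⟨hvD, hviso⟩ := mem_isolatedIn.1 hv
  have hw : w ∉ D := fun h => hviso w h hvw.symm
  have hvD' : v ∈ insert w (D.erase u) := mem_insert_of_mem (mem_erase_of_ne_of_mem huv.symm hvD)
  have hwD' : w ∈ insert w (D.erase u) := mem_insert_self w _
  have hdom := hD.1.insert_erase hwu fun z _ huz hz =>
    (hN z huz.symm).elim (fun hzv => absurd hzv.symm (hz v hvD huv.symm)) (·.symm)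
  refine ⟨hD.insert_erase hdom hvD huv.symm hvw fun a haD _ hua => ?_,
    isolatedIn_insert_erase_ssubset hvD huv.symm hvw (fun a haD _ hua => ?_) hv
      fun h => (mem_isolatedIn.1 h).2 w hwD' hvw.symm⟩
  · have hwa : w ≠ a := (ne_of_mem_of_not_mem haD hw).symm
    rcases eq_or_ne a v with rfl | hav
    · exact ⟨w, hwD', hwa, Or.inl hvw.symm⟩
    rcases hua with hua | ⟨y, huy, hya⟩
    · exact ⟨w, hwD', hwa, Or.inl ((hN a hua.symm).resolve_left (hviso a haD)).symm⟩
    · rcases hN y huy.symm with hyv | hyw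
      · exact ⟨v, hvD', hav.symm, Or.inr ⟨y, hyv.symm, hya⟩⟩
      · exact ⟨w, hwD', hwa, Or.inr ⟨y, hyw.symm, hya⟩⟩
  · exact ⟨w, hwD', ((hN a hua.symm).resolve_left (hviso a haD)).symm⟩

lemma IsSemiTDSet.exists_exchange (hP5 : IsEmpty (pathGraph 5 ↪g H))
    (hC5 : IsEmpty (cycleGraph 5 ↪g H)) (hD : IsSemiTDSet H D) (hv : v ∈ isolatedIn H D) :
    ∃ D', IsSemiTDSet H D' ∧ #D' = #D ∧ isolatedIn H D' ⊂ isolatedIn H D := by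
  obtain ⟨hvD, hviso⟩ := mem_isolatedIn.1 hv
  obtain ⟨u, hu, huv, hvu⟩ := hD.2 v hvD
  obtain ⟨w, huw, hwv⟩ := hvu.resolve_left (hviso u hu)
  have hw : w ∉ D := fun h => hviso w h hwv
  by_cases hpriv : ∀ x ∉ D, H.Adj v x → (∀ d ∈ D, d ≠ v → ¬H.Adj d x) → H.Adj w x
  · obtain ⟨hD', hlt⟩ := hD.exchange_of_dominates_private hP5 hv hu huv hwv.symm huw.symm hpriv
    exact ⟨_, hD', card_insert_erase_of_notMem hvD hw, hlt⟩
  · push Not at hpriv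
    obtain ⟨x, hxD, hvx, hxpriv, hwx⟩ := hpriv
    obtain ⟨hD', hlt⟩ := hD.exchange_of_forall_adj_or_adj hv huv hwv.symm huw.symm
      fun q => adj_or_adj_of_adj_of_P5free_of_C5free hP5 hC5 hvx.symm hwv.symm huw.symm
        (hwx ·.symm) (hxpriv u hu huv ·.symm) (hviso u hu ·.symm)
    exact ⟨_, hD', card_insert_erase_of_notMem hu hw, hlt⟩

lemma IsSemiTDSet.exists_isTotDomSet_card_eq (hP5 : IsEmpty (pathGraph 5 ↪g H))
    (hC5 : IsEmpty (cycleGraph 5 ↪g H)) (hD : IsSemiTDSet H D) :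
    ∃ T, IsTotDomSet H T ∧ #T = #D := by
  induction hn : #(isolatedIn H D) using Nat.strong_induction_on generalizing D with
  | _ n ih =>
  obtain hempty | ⟨v, hv⟩ := (isolatedIn H D).eq_empty_or_nonempty
  · exact ⟨D, hD.isTotDomSet_of_isolatedIn_eq_empty hempty, rfl⟩
  · obtain ⟨D', hD', hcard, hlt⟩ := hD.exists_exchange hP5 hC5 hv
    obtain ⟨T, hT, hTc⟩ := ih _ (hn ▸ card_lt_card hlt) hD' rfl
    exact ⟨T, hT, hTc.trans hcard⟩

variable [Fintype W]

lemma exists_isTotDomSet_card_eq_gammaT (h : ∀ v, ∃ u, H.Adj v u) :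
    ∃ D, IsTotDomSet H D ∧ #D = gammaT H :=
  Nat.sInf_mem (s := {n | ∃ D, IsTotDomSet H D ∧ #D = n}) ⟨_, univ, isTotDomSet_univ h, rfl⟩

lemma exists_isSemiTDSet_card_eq_gammaT2 (h : ∀ v, ∃ u, H.Adj v u) :
    ∃ D, IsSemiTDSet H D ∧ #D = gammaT2 H :=
  Nat.sInf_mem (s := {n | ∃ D, IsSemiTDSet H D ∧ #D = n})
    ⟨_, univ, (isTotDomSet_univ h).isSemiTDSet, rfl⟩

lemma gammaT2_le_card (hD : IsSemiTDSet H D) : gammaT2 H ≤ #D := by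
  unfold gammaT2
  exact Nat.sInf_le ⟨D, hD, rfl⟩

lemma gammaT_le_card (hD : IsTotDomSet H D) : gammaT H ≤ #D := by
  unfold gammaT
  exact Nat.sInf_le ⟨D, hD, rfl⟩

lemma le_gammaT {n : ℕ} (h : ∀ v, ∃ u, H.Adj v u) (hn : ∀ D, IsTotDomSet H D → n ≤ #D) :
    n ≤ gammaT H := by
  obtain ⟨D, hD, hDc⟩ := exists_isTotDomSet_card_eq_gammaT h
  exact hDc ▸ hn D hD

lemma gammaT2_le_gammaT (h : ∀ v, ∃ u, H.Adj v u) : gammaT2 H ≤ gammaT H := by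
  obtain ⟨D, hD, hDc⟩ := exists_isTotDomSet_card_eq_gammaT h
  exact hDc ▸ gammaT2_le_card hD.isSemiTDSet

lemma gammaT_le_gammaT2 (hP5 : IsEmpty (pathGraph 5 ↪g H)) (hC5 : IsEmpty (cycleGraph 5 ↪g H))
    (h : ∀ v, ∃ u, H.Adj v u) : gammaT H ≤ gammaT2 H := by
  obtain ⟨D, hD, hDc⟩ := exists_isSemiTDSet_card_eq_gammaT2 h
  obtain ⟨T, hT, hTc⟩ := hD.exists_isTotDomSet_card_eq hP5 hC5
  exact hDc ▸ hTc ▸ gammaT_le_card hT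

end Domination

section Invariance

variable {A B : Type*} {Ga : SimpleGraph A} {Gb : SimpleGraph B}

lemma WithinTwo.map {u v : A} (f : Ga →g Gb) (h : WithinTwo Ga u v) : WithinTwo Gb (f u) (f v) :=
  h.imp f.map_adj fun ⟨w, huw, hwv⟩ => ⟨f w, f.map_adj huw, f.map_adj hwv⟩

variable [DecidableEq A] [DecidableEq B]

lemma IsTotDomSet.map (e : Ga ≃g Gb) {D : Finset A} (hD : IsTotDomSet Ga D) :
    IsTotDomSet Gb (D.map e.toEquiv.toEmbedding) := by
  intro v
  obtain ⟨u, hu, huv⟩ := hD (e.symm v)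
  exact ⟨e u, mem_map_of_mem _ hu, by simpa using e.map_adj_iff.2 huv⟩

lemma IsSemiTDSet.map (e : Ga ≃g Gb) {D : Finset A} (hD : IsSemiTDSet Ga D) :
    IsSemiTDSet Gb (D.map e.toEquiv.toEmbedding) := by
  refine ⟨fun v hv => ?_, fun v hv => ?_⟩
  · have hv' : e.symm v ∉ D := fun h => hv (by simpa using mem_map_of_mem e.toEquiv.toEmbedding h)
    obtain ⟨u, hu, huv⟩ := hD.1 _ hv'
    exact ⟨e u, mem_map_of_mem _ hu, by simpa using e.map_adj_iff.2 huv⟩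
  · obtain ⟨a, ha, rfl⟩ := mem_map.1 hv
    obtain ⟨p, hp, hpa, hpa2⟩ := hD.2 a ha
    exact ⟨e p, mem_map_of_mem _ hp, e.injective.ne hpa, hpa2.map e.toHom⟩

variable [Fintype A] [Fintype B]

lemma Iso.gammaT_eq (e : Ga ≃g Gb) : gammaT Ga = gammaT Gb :=
  sInf_card_eq_of_equiv e.toEquiv (fun _ hD => hD.map e) fun _ hD => hD.map e.symm

lemma Iso.gammaT2_eq (e : Ga ≃g Gb) : gammaT2 Ga = gammaT2 Gb :=
  sInf_card_eq_of_equiv e.toEquiv (fun _ hD => hD.map e) fun _ hD => hD.map e.symm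

lemma gammaT2_eq_gammaT_of_embedding {V : Type*} [Fintype V] [DecidableEq V] {G : SimpleGraph V}
    (hG : ∀ S : Finset V, (∀ v : (S : Set V), ∃ u, (G.induce (S : Set V)).Adj v u) →
      gammaT2 (G.induce (S : Set V)) = gammaT (G.induce (S : Set V)))
    (f : Ga ↪g G) (h : ∀ v, ∃ u, Ga.Adj v u) : gammaT2 Ga = gammaT Ga := by
  let e : Ga ≃g G.induce ((Set.range f).toFinset : Set V) :=
    (Iso.refl.induce (by rw [Set.coe_toFinset]; exact Set.bijOn_id _)).comp f.isoInduceRange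
  rw [e.gammaT_eq, e.gammaT2_eq]
  refine hG _ fun v => ?_
  obtain ⟨u, hu⟩ := h (e.symm v)
  exact ⟨e u, by simpa using e.map_adj_iff.2 hu⟩

end Invariance

lemma gammaT2_cycleGraph_five_lt_gammaT : gammaT2 (cycleGraph 5) < gammaT (cycleGraph 5) :=
  calc gammaT2 (cycleGraph 5) ≤ #({0, 2} : Finset (Fin 5)) :=
        gammaT2_le_card (by unfold IsSemiTDSet IsDomSet WithinTwo; decide)
    _ < 3 := by decide
    _ ≤ gammaT (cycleGraph 5) := le_gammaT (by decide) (by unfold IsTotDomSet; decide)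

lemma gammaT2_pathGraph_five_lt_gammaT : gammaT2 (pathGraph 5) < gammaT (pathGraph 5) :=
  calc gammaT2 (pathGraph 5) ≤ #({1, 3} : Finset (Fin 5)) :=
        gammaT2_le_card (by unfold IsSemiTDSet IsDomSet WithinTwo; decide)
    _ < 3 := by decide
    _ ≤ gammaT (pathGraph 5) := le_gammaT (by decide) (by unfold IsTotDomSet; decide)

end SimpleGraph

theorem semitotal_eq_total_hereditary_iff {V : Type*} [Fintype V] [DecidableEq V]
    (G : SimpleGraph V) :
    (∀ S : Finset V,
        (∀ v : (S : Set V), ∃ u, (SimpleGraph.induce (S : Set V) G).Adj v u) →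
        gammaT2 (SimpleGraph.induce (S : Set V) G) =
          gammaT (SimpleGraph.induce (S : Set V) G)) ↔
    (IsEmpty (cycleGraph 5 ↪g G) ∧ IsEmpty (pathGraph 5 ↪g G)) := by
  constructor
  · intro hG
    exact ⟨⟨fun f => gammaT2_cycleGraph_five_lt_gammaT.ne
        (gammaT2_eq_gammaT_of_embedding hG f (by decide))⟩,
      ⟨fun f => gammaT2_pathGraph_five_lt_gammaT.ne
        (gammaT2_eq_gammaT_of_embedding hG f (by decide))⟩⟩
  · rintro ⟨hC5, hP5⟩ S hS
    have hP5S := isEmpty_embedding_induce hP5 (S : Set V)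
    have hC5S := isEmpty_embedding_induce hC5 (S : Set V)
    exact (gammaT2_le_gammaT hS).antisymm (gammaT_le_gammaT2 hP5S hC5S hS)
end

section
/- Let G be a (C_5, P_5)-free graph and H an induced subgraph of G with no isolated vertex. Then every minimum semitotal dominating set of H can be modified, without increasing its size, into a total dominating set of H; in particular γ_t(H) ≤ γ_{t2}(H). -/
/-
Call a vertex of a semitotal dominating set `D` isolated if it has no neighbour in `D`. Given
one, `v`, its partner `u ∈ D` lies at distance two, via some `w ∉ D`. Swapping `v` for `w`
keeps `D` dominating unless some private neighbour `x` of `v` is missed by `w`; in that case the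
path `x v w u` shows that `w` sees every private neighbour of `u`, and we swap `u` for `w`
instead. Absence of an induced `P₅` or `C₅` guarantees that either swap keeps every vertex
within distance two of another and creates no new isolated vertex, while `v` stops being
isolated. Iterating gives a total dominating set of no larger size.
-/

open SimpleGraph

/-- A path `a b c d e` whose only possible chord is `ae` spans an induced `P₅` or `C₅` (the
non-edges force the five vertices to be distinct), so this says `H` has neither. -/
def InducedP5C5Free {W : Type*} (H : SimpleGraph W) : Prop :=
  ∀ a b c d e : W, H.Adj a b → H.Adj b c → H.Adj c d → H.Adj d e →
    ¬H.Adj a c → ¬H.Adj a d → ¬H.Adj b d → ¬H.Adj b e → ¬H.Adj c e → False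

section InducedP5C5Free

variable {W : Type*} {H : SimpleGraph W}

lemma inducedP5C5Free_of_isEmpty (hC5 : IsEmpty (cycleGraph 5 ↪g H))
    (hP5 : IsEmpty (pathGraph 5 ↪g H)) : InducedP5C5Free H := by
  intro a b c d e hab hbc hcd hde hac had hbd hbe hce
  let f : Fin 5 → W := ![a, b, c, d, e]
  have hinj : Function.Injective f := by
    intro i j hij
    fin_cases i <;> fin_cases j <;> simp_all [f, H.adj_comm]
  by_cases hae : H.Adj a e
  · refine hC5.elim ⟨⟨f, hinj⟩, fun {i j} => ?_⟩
    fin_cases i <;> fin_cases j <;> simp_all +decide [f, H.adj_comm]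
  · refine hP5.elim ⟨⟨f, hinj⟩, fun {i j} => ?_⟩
    fin_cases i <;> fin_cases j <;> simp_all +decide [f, pathGraph_adj, H.adj_comm]

lemma InducedP5C5Free.induce (hH : InducedP5C5Free H) (s : Set W) :
    InducedP5C5Free (H.induce s) :=
  fun a b c d e => hH a b c d e

lemma InducedP5C5Free.withinTwo (hH : InducedP5C5Free H) {p q w d : W}
    (hpd : WithinTwo H p d) (hpw : H.Adj p w) (hwq : H.Adj w q) (hpq : ¬H.Adj p q) :
    WithinTwo H w d ∨ q ≠ d ∧ WithinTwo H q d := by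
  rcases hpd with hpd | ⟨y, hpy, hyd⟩
  · exact .inl (.inr ⟨p, hpw.symm, hpd⟩)
  by_cases hwd : H.Adj w d
  · exact .inl (.inl hwd)
  by_cases hwy : H.Adj w y
  · exact .inl (.inr ⟨y, hwy, hyd⟩)
  by_cases hpd : H.Adj p d
  · exact .inl (.inr ⟨p, hpw.symm, hpd⟩)
  by_cases hqy : H.Adj q y
  · exact .inr ⟨fun hqd => hwd (hqd ▸ hwq), .inr ⟨y, hqy, hyd⟩⟩
  exact (hH d y p w q hyd.symm hpy.symm hpw hwq (hpd ∘ .symm) (hwd ∘ .symm) (hwy ∘ .symm)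
    (hqy ∘ .symm) hpq).elim

end InducedP5C5Free

def isolatedVerts {W : Type*} (H : SimpleGraph W) [DecidableRel H.Adj] (D : Finset W) :
    Finset W :=
  {d ∈ D | ∀ e ∈ D, ¬H.Adj e d}

lemma mem_isolatedVerts {W : Type*} {H : SimpleGraph W} [DecidableRel H.Adj] {D : Finset W}
    {d : W} : d ∈ isolatedVerts H D ↔ d ∈ D ∧ ∀ e ∈ D, ¬H.Adj e d :=
  Finset.mem_filter

section Swap

open Finset

variable {W : Type*} [DecidableEq W] {H : SimpleGraph W} {D : Finset W} {p q w : W}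

lemma IsDomSet.isTotDomSet [DecidableRel H.Adj] (hD : IsDomSet H D)
    (hiso : isolatedVerts H D = ∅) : IsTotDomSet H D := by
  intro v
  by_cases hv : v ∈ D
  · have : v ∉ isolatedVerts H D := hiso ▸ notMem_empty v
    simpa [mem_isolatedVerts, hv] using this
  · exact hD v hv

lemma card_insert_erase_le (hp : p ∈ D) : #(insert w (D.erase p)) ≤ #D :=
  (card_insert_le _ _).trans (card_erase_add_one hp).le

lemma IsDomSet.insert_erase (hD : IsDomSet H D) (hwp : H.Adj w p)
    (hpriv : ∀ x ∉ D, H.Adj p x → (∀ e ∈ D, e ≠ p → ¬H.Adj e x) → x = w ∨ H.Adj w x) :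
    IsDomSet H (insert w (D.erase p)) := by
  intro x hx
  rw [mem_insert, mem_erase, not_or, not_and_or, not_not] at hx
  obtain ⟨hxw, rfl | hxD⟩ := hx
  · exact ⟨w, mem_insert_self _ _, hwp⟩
  by_cases hother : ∃ e ∈ D, e ≠ p ∧ H.Adj e x
  · obtain ⟨e, he, hep, hex⟩ := hother
    exact ⟨e, mem_insert_of_mem (mem_erase.2 ⟨hep, he⟩), hex⟩
  push Not at hother
  obtain ⟨e, he, hex⟩ := hD x hxD
  obtain rfl : e = p := by_contra fun hep => hother e he hep hex
  exact ⟨w, mem_insert_self _ _, (hpriv x hxD hex hother).resolve_left hxw⟩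

lemma IsSemiTDSet.insert_erase (hH : InducedP5C5Free H) (hD : IsSemiTDSet H D) (hqD : q ∈ D)
    (hqp : q ≠ p) (hwD : w ∉ D) (hpw : H.Adj p w) (hwq : H.Adj w q) (hpq : ¬H.Adj p q)
    (hpriv : ∀ x ∉ D, H.Adj p x → (∀ e ∈ D, e ≠ p → ¬H.Adj e x) → x = w ∨ H.Adj w x) :
    IsSemiTDSet H (insert w (D.erase p)) := by
  have hqD' : q ∈ insert w (D.erase p) := mem_insert_of_mem (mem_erase.2 ⟨hqp, hqD⟩)
  refine ⟨hD.1.insert_erase hpw.symm hpriv, fun d hd => ?_⟩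
  obtain rfl | hd := mem_insert.1 hd
  · exact ⟨q, hqD', fun h => hwD (h ▸ hqD), .inl hwq.symm⟩
  obtain ⟨-, hdD⟩ := mem_erase.1 hd
  obtain ⟨u, hu, hud, hud2⟩ := hD.2 d hdD
  by_cases hup : u = p
  · subst hup
    rcases hH.withinTwo hud2 hpw hwq hpq with hwd | ⟨hqd, hqd2⟩
    · exact ⟨w, mem_insert_self _ _, fun h => hwD (h ▸ hdD), hwd⟩
    · exact ⟨q, hqD', hqd, hqd2⟩
  · exact ⟨u, mem_insert_of_mem (mem_erase.2 ⟨hup, hu⟩), hud, hud2⟩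

lemma isolatedVerts_insert_erase_subset [DecidableRel H.Adj] (hqD : q ∈ D) (hqp : q ≠ p)
    (hqw : H.Adj q w) (hp : ∀ d ∈ D, ¬H.Adj w d → ¬H.Adj p d) :
    isolatedVerts H (insert w (D.erase p)) ⊆ isolatedVerts H D := by
  intro d hd
  rw [mem_isolatedVerts] at hd ⊢
  obtain ⟨hdD', hd⟩ := hd
  have hdw : d ≠ w := by
    rintro rfl
    exact hd q (mem_insert_of_mem (mem_erase.2 ⟨hqp, hqD⟩)) hqw
  have hdD : d ∈ D := (mem_erase.1 ((mem_insert.1 hdD').resolve_left hdw)).2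
  refine ⟨hdD, fun e he hed => ?_⟩
  by_cases hep : e = p
  · exact hp d hdD (hd w (mem_insert_self _ _)) (hep ▸ hed)
  · exact hd e (mem_insert_of_mem (mem_erase.2 ⟨hep, he⟩)) hed

lemma card_isolatedVerts_insert_erase_lt [DecidableRel H.Adj] {v : W} (hqD : q ∈ D)
    (hqp : q ≠ p) (hqw : H.Adj q w) (hp : ∀ d ∈ D, ¬H.Adj w d → ¬H.Adj p d)
    (hv : v ∈ isolatedVerts H D) (hwv : H.Adj w v) :
    #(isolatedVerts H (insert w (D.erase p))) < #(isolatedVerts H D) := by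
  refine card_lt_card ((ssubset_iff_of_subset
    (isolatedVerts_insert_erase_subset hqD hqp hqw hp)).2 ⟨v, hv, fun hv' => ?_⟩)
  exact (mem_isolatedVerts.1 hv').2 w (mem_insert_self _ _) hwv

lemma IsSemiTDSet.exists_card_isolatedVerts_lt [DecidableRel H.Adj] (hH : InducedP5C5Free H)
    (hD : IsSemiTDSet H D) {v : W} (hv : v ∈ isolatedVerts H D) :
    ∃ D', IsSemiTDSet H D' ∧ #D' ≤ #D ∧ #(isolatedVerts H D') < #(isolatedVerts H D) := by
  obtain ⟨hvD, hvIso⟩ := mem_isolatedVerts.1 hv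
  obtain ⟨u, hu, huv, huv2⟩ := hD.2 v hvD
  have hnuv : ¬H.Adj u v := hvIso u hu
  obtain ⟨w, huw, hwv⟩ := huv2.resolve_left hnuv
  have hwD : w ∉ D := fun hw => hvIso w hw hwv
  by_cases hpriv : ∀ x ∉ D, H.Adj v x → (∀ e ∈ D, e ≠ v → ¬H.Adj e x) → x = w ∨ H.Adj w x
  · exact ⟨_, hD.insert_erase hH hu huv hwD hwv.symm huw.symm (hnuv ∘ .symm) hpriv,
      card_insert_erase_le hvD,
      card_isolatedVerts_insert_erase_lt hu huv huw (fun d hd _ h => hvIso d hd h.symm) hv hwv⟩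
  push Not at hpriv
  obtain ⟨x, -, hvx, hxpriv, -, hwx⟩ := hpriv
  have hux : ¬H.Adj u x := hxpriv u hu huv
  have hw_of_u : ∀ y, H.Adj u y → ¬H.Adj v y → H.Adj w y := fun y huy hvy =>
    by_contra fun hwy => hH x v w u y hvx.symm hwv.symm huw.symm huy (hwx ∘ .symm)
      (hux ∘ .symm) (hnuv ∘ .symm) hvy hwy
  refine ⟨_, hD.insert_erase hH hvD huv.symm hwD huw hwv hnuv
      (fun y _ huy hy => .inr (hw_of_u y huy (hy v hvD huv.symm))),
    card_insert_erase_le hu,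
    card_isolatedVerts_insert_erase_lt hvD huv.symm hwv.symm
      (fun d hd hwd hud => hwd (hw_of_u d hud fun h => hvIso d hd h.symm)) hv hwv⟩

end Swap

section Domination

variable {W : Type*} [DecidableEq W] {H : SimpleGraph W}

open Finset in
theorem IsSemiTDSet.exists_isTotDomSet_card_le (hH : InducedP5C5Free H) {D : Finset W}
    (hD : IsSemiTDSet H D) : ∃ D', IsTotDomSet H D' ∧ #D' ≤ #D := by
  classical
  induction hn : #(isolatedVerts H D) using Nat.strong_induction_on generalizing D with
  | _ n ih =>
  obtain hiso | ⟨v, hv⟩ := (isolatedVerts H D).eq_empty_or_nonempty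
  · exact ⟨D, hD.1.isTotDomSet hiso, le_rfl⟩
  obtain ⟨D', hD', hcard, hlt⟩ := hD.exists_card_isolatedVerts_lt hH hv
  obtain ⟨D'', hD'', hcard'⟩ := ih _ (hn ▸ hlt) hD' rfl
  exact ⟨D'', hD'', hcard'.trans hcard⟩

lemma isSemiTDSet_univ [Fintype W] (h : ∀ v, ∃ u, H.Adj v u) : IsSemiTDSet H Finset.univ :=
  ⟨fun v hv => (hv (Finset.mem_univ v)).elim, fun v _ =>
    let ⟨u, hvu⟩ := h v
    ⟨u, Finset.mem_univ u, hvu.ne', .inl hvu.symm⟩⟩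

theorem gammaT_le_gammaT2 [Fintype W] (hH : InducedP5C5Free H)
    (hex : ∃ D, IsSemiTDSet H D) : gammaT H ≤ gammaT2 H := by
  obtain ⟨D₀, hD₀⟩ := hex
  obtain ⟨D, hD, hDcard⟩ : gammaT2 H ∈ {n | ∃ D : Finset W, IsSemiTDSet H D ∧ D.card = n} :=
    Nat.sInf_mem ⟨D₀.card, D₀, hD₀, rfl⟩
  obtain ⟨D', hD', hle⟩ := hD.exists_isTotDomSet_card_le hH
  calc gammaT H ≤ D'.card := Nat.sInf_le ⟨D', hD', rfl⟩
    _ ≤ D.card := hle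
    _ = gammaT2 H := hDcard

end Domination

theorem c5p5_free_min_semitotal_to_total {V : Type*} [Fintype V] [DecidableEq V]
    (G : SimpleGraph V)
    (hC5 : IsEmpty (cycleGraph 5 ↪g G)) (hP5 : IsEmpty (pathGraph 5 ↪g G))
    (S : Finset V)
    (hiso : ∀ v : (S : Set V), ∃ u, (SimpleGraph.induce (S : Set V) G).Adj v u) :
    (∀ D : Finset (S : Set V),
        IsSemiTDSet (SimpleGraph.induce (S : Set V) G) D →
        D.card = gammaT2 (SimpleGraph.induce (S : Set V) G) →
        ∃ D' : Finset (S : Set V),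
          IsTotDomSet (SimpleGraph.induce (S : Set V) G) D' ∧ D'.card ≤ D.card) ∧
    gammaT (SimpleGraph.induce (S : Set V) G) ≤
      gammaT2 (SimpleGraph.induce (S : Set V) G) := by
  have hH := (inducedP5C5Free_of_isEmpty hC5 hP5).induce (S : Set V)
  exact ⟨fun D hD _ => hD.exists_isTotDomSet_card_le hH,
    gammaT_le_gammaT2 hH ⟨_, isSemiTDSet_univ hiso⟩⟩
end
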